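/- Let π : Q̃ → Q be a minimal gradable covering of a connected locally finite quiver Q, with (a, 0) a vertex of Q̃ for some a ∈ Q_0. Then (b, n) is a vertex of Q̃ (for b ∈ Q_0, n ∈ ℤ) if and only if n ≡ d (mod r_Q), where d is the degree of some walk in Q from a to b, and r_Q is the grading period of Q. -/

import Mathlib

universe u v

/-- A walk in a quiver: a sequence of forward or backward traversals of arrows. -/
inductive QWalk {V : Type u} [Quiver.{v} V] : V → V → Type (max u v) where
  | nil {a : V} : QWalk a a
  | fwd {a b c : V} (w : QWalk a b) (e : b ⟶ c) : QWalk a c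
  | bwd {a b c : V} (w : QWalk a b) (e : c ⟶ b) : QWalk a c

namespace QWalk

/-- The degree of a walk: forward arrows count +1, backward arrows count -1. -/
def degree {V : Type u} [Quiver.{v} V] : {a b : V} → QWalk a b → ℤ
  | _, _, nil => 0
  | _, _, fwd w _ => degree w + 1
  | _, _, bwd w _ => degree w - 1

end QWalk

/-- A quiver is gradable if any two walks between the same pair of vertices
have the same degree. -/
def QuiverGradable (V : Type u) [Quiver.{v} V] : Prop :=
  ∀ ⦃a b : V⦄ (w w' : QWalk a b), w.degree = w'.degree

/-- A quiver is locally finite if there are only finitely many arrows between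
any two vertices and each vertex has finitely many neighbours. -/
def LocallyFiniteQuiver (V : Type u) [Quiver.{v} V] : Prop :=
  (∀ a b : V, Finite (a ⟶ b)) ∧
    ∀ a : V, {b : V | Nonempty (a ⟶ b) ∨ Nonempty (b ⟶ a)}.Finite
/-- The quiver `Q^ℤ`: vertices are pairs `(a, i)` with `a` a vertex of `Q` and `i : ℤ`;
arrows `(α, i) : (a, i) → (b, i + 1)` for each arrow `α : a → b` of `Q`. -/
def ZQuiver (V : Type u) [Quiver.{v} V] : Quiver.{v} (V × ℤ) :=
  ⟨fun x y => (x.1 ⟶ y.1) × PLift (y.2 = x.2 + 1)⟩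
/-- Two vertices of `Q^ℤ` lie in the same connected component iff there is a walk
between them. -/
def ZConn (V : Type u) [Quiver.{v} V] (x y : V × ℤ) : Prop :=
  Nonempty (@QWalk (V × ℤ) (ZQuiver V) x y)

/-- `r` is the grading period of the quiver `Q`: it is `0` if `Q` is gradable, and
otherwise it is the minimal positive degree of a closed walk in `Q`. -/
def IsGradingPeriod (V : Type u) [Quiver.{v} V] (r : ℤ) : Prop :=
  (QuiverGradable V ∧ r = 0) ∨
    (¬ QuiverGradable V ∧ 0 < r ∧ (∃ (a : V) (w : QWalk a a), w.degree = r) ∧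
      ∀ (a : V) (w : QWalk a a), 0 < w.degree → r ≤ w.degree)

/-!
A walk in `Q^ℤ` from `(a, i)` to `(b, j)` projects to a walk in `Q` of degree `j - i`,
and every walk in `Q` lifts, so `(b, n)` lies in the component of `(a, 0)` iff some walk
from `a` to `b` has degree exactly `n`. It remains to see that the degrees of walks from
`a` to `b` form a full residue class mod `r`: appending a closed walk changes the degree
by a multiple of `r`, and conversely a closed walk of degree `r` exists, and can be moved
to `b` by conjugating with a path, so that every shift by a multiple of `r` is realised.
-/

namespace QWalk

variable {V : Type u} [Quiver.{v} V]

def comp : {a b c : V} → QWalk a b → QWalk b c → QWalk a c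
  | _, _, _, w, nil => w
  | _, _, _, w, fwd u e => fwd (comp w u) e
  | _, _, _, w, bwd u e => bwd (comp w u) e

@[simp]
lemma degree_nil {a : V} : (nil : QWalk a a).degree = 0 := by
  simp [degree]

@[simp]
lemma degree_comp : ∀ {a b c : V} (w : QWalk a b) (u : QWalk b c),
    (w.comp u).degree = w.degree + u.degree
  | _, _, _, _, nil => by simp [comp]
  | _, _, _, w, fwd u e => by simp only [comp, degree, degree_comp w u]; ring
  | _, _, _, w, bwd u e => by simp only [comp, degree, degree_comp w u]; ring

def reverse : {a b : V} → QWalk a b → QWalk b a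
  | _, _, nil => nil
  | _, _, fwd w e => comp (bwd nil e) (reverse w)
  | _, _, bwd w e => comp (fwd nil e) (reverse w)

@[simp]
lemma degree_reverse : ∀ {a b : V} (w : QWalk a b), w.reverse.degree = -w.degree
  | _, _, nil => by simp [reverse]
  | _, _, fwd w e => by simp only [reverse, degree_comp, degree, degree_reverse w]; ring
  | _, _, bwd w e => by simp only [reverse, degree_comp, degree, degree_reverse w]; ring

lemma exists_degree_eq_mul {a : V} (c : QWalk a a) (m : ℤ) :
    ∃ u : QWalk a a, u.degree = m * c.degree := by
  induction m using Int.induction_on with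
  | zero => exact ⟨nil, by simp⟩
  | succ k ih =>
    obtain ⟨u, hu⟩ := ih
    exact ⟨u.comp c, by simp only [degree_comp, hu]; ring⟩
  | pred k ih =>
    obtain ⟨u, hu⟩ := ih
    exact ⟨u.comp c.reverse, by simp only [degree_comp, degree_reverse, hu]; ring⟩

lemma exists_degree_eq_of_modEq {a b : V} (w : QWalk a b) (c : QWalk b b) {n : ℤ}
    (h : n ≡ w.degree [ZMOD c.degree]) : ∃ w' : QWalk a b, w'.degree = n := by
  obtain ⟨m, hm⟩ := h.dvd
  obtain ⟨u, hu⟩ := c.exists_degree_eq_mul (-m)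
  exact ⟨w.comp u, by rw [degree_comp, hu]; linear_combination hm⟩

end QWalk

lemma IsGradingPeriod.exists_closed_walk_degree_eq {V : Type u} [Quiver.{v} V]
    (hconn : ∀ a b : V, Nonempty (QWalk a b)) {r : ℤ} (hr : IsGradingPeriod V r) (b : V) :
    ∃ c : QWalk b b, c.degree = r := by
  rcases hr with ⟨-, rfl⟩ | ⟨-, -, ⟨a, c, hc⟩, -⟩
  · exact ⟨QWalk.nil, QWalk.degree_nil⟩
  · obtain ⟨p⟩ := hconn b a
    exact ⟨(p.comp c).comp p.reverse, by simp [hc]⟩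

section ZQuiver

variable {V : Type u} [Quiver.{v} V]

lemma exists_degree_eq_of_zQuiver_walk {x y : V × ℤ} (W : @QWalk (V × ℤ) (ZQuiver V) x y) :
    ∃ w : QWalk x.1 y.1, w.degree = y.2 - x.2 := by
  let : Quiver (V × ℤ) := ZQuiver V
  induction W with
  | nil => exact ⟨QWalk.nil, by simp⟩
  | fwd _ e ih =>
    obtain ⟨w, hw⟩ := ih
    exact ⟨w.fwd e.1, by simp only [QWalk.degree]; have := e.2.down; omega⟩
  | bwd _ e ih =>
    obtain ⟨w, hw⟩ := ih
    exact ⟨w.bwd e.1, by simp only [QWalk.degree]; have := e.2.down; omega⟩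

lemma zConn_add_degree {a b : V} (w : QWalk a b) (i : ℤ) : ZConn V (a, i) (b, i + w.degree) := by
  let : Quiver (V × ℤ) := ZQuiver V
  induction w with
  | nil => simpa using ⟨QWalk.nil⟩
  | fwd w e ih =>
    obtain ⟨W⟩ := ih
    have e' : ((_, i + w.degree) : V × ℤ) ⟶ (_, i + (w.fwd e).degree) :=
      ⟨e, ⟨by simp only [QWalk.degree]; ring⟩⟩
    exact ⟨W.fwd e'⟩
  | bwd w e ih =>
    obtain ⟨W⟩ := ih
    have e' : ((_, i + (w.bwd e).degree) : V × ℤ) ⟶ (_, i + w.degree) :=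
      ⟨e, ⟨by simp only [QWalk.degree]; ring⟩⟩
    exact ⟨W.bwd e'⟩

lemma zConn_iff_exists_degree_eq (a b : V) (i j : ℤ) :
    ZConn V (a, i) (b, j) ↔ ∃ w : QWalk a b, w.degree = j - i := by
  constructor
  · rintro ⟨W⟩
    exact exists_degree_eq_of_zQuiver_walk W
  · rintro ⟨w, hw⟩
    simpa [hw] using zConn_add_degree w i

end ZQuiver

theorem mem_component_iff_degree_mod_period_general (V : Type u) [Quiver.{v} V]
    (hconn : ∀ a b : V, Nonempty (QWalk a b))
    {r : ℤ} (hr : IsGradingPeriod V r) (a b : V) (n : ℤ) :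
    ZConn V (a, 0) (b, n) ↔ ∃ w : QWalk a b, n ≡ w.degree [ZMOD r] := by
  rw [zConn_iff_exists_degree_eq, sub_zero]
  obtain ⟨c, rfl⟩ := hr.exists_closed_walk_degree_eq hconn b
  constructor
  · rintro ⟨w, rfl⟩
    exact ⟨w, Int.ModEq.refl _⟩
  · rintro ⟨w, hw⟩
    exact w.exists_degree_eq_of_modEq c hw

/-- Let `π : Q̃ → Q` be a minimal gradable covering of a connected
locally finite quiver `Q`, where `Q̃` is the connected component of `Q^ℤ` containing
a vertex `(a, 0)`.  Then `(b, n)` is a vertex of `Q̃` if and only if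
`n ≡ d (mod r_Q)` where `d` is the degree of some walk in `Q` from `a` to `b`. -/
theorem mem_component_iff_degree_mod_period (V : Type u) [Quiver.{v} V]
    (hconn : ∀ a b : V, Nonempty (QWalk a b)) (hlf : LocallyFiniteQuiver V)
    {r : ℤ} (hr : IsGradingPeriod V r) (a b : V) (n : ℤ) :
    ZConn V (a, 0) (b, n) ↔ ∃ w : QWalk a b, n ≡ w.degree [ZMOD r] :=
  mem_component_iff_degree_mod_period_general V hconn hr a b n
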